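/- Let (X,c) be a metric space, V_1 ⊆ X finite and even, O_1 a min-cost perfect matching on V_1, and k ∈ ℕ. Let P_1,…,P_k be edge-disjoint O_1-alternating paths each starting and ending with an O_1-edge, maximizing the total gain Σ g_{O_1}(P_i), and let M̄ := O_1 Δ P_1 Δ … Δ P_k and M_1 := M̄ ∪ {e(P_i) : i ∈ [k]} where e(P_i) joins the endpoints of P_i. Then c(M_1) ≤ 3·c(O_1). -/

import Mathlib

open scoped Classical

/-- The list of edges of the path visiting the vertices of `l` in order. -/
def edgeList {V : Type*} (l : List V) : List (Sym2 V) :=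
  l.zipWith (fun a b => s(a, b)) l.tail

/-- The cost of an edge in a metric space: the distance between its endpoints. -/
noncomputable def edgeCost {V : Type*} [MetricSpace V] (e : Sym2 V) : ℝ :=
  Sym2.lift ⟨dist, fun a b => dist_comm a b⟩ e

/-- The total cost of a finite set of edges. -/
noncomputable def setCost {V : Type*} [MetricSpace V] (S : Finset (Sym2 V)) : ℝ :=
  ∑ e ∈ S, edgeCost e

/-- A list of edges is `M`-alternating if consecutive edges alternate between membership
and non-membership in `M`. -/
def IsAlt {V : Type*} (M : Set (Sym2 V)) (es : List (Sym2 V)) : Prop :=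
  ∀ (i : ℕ) (h : i + 1 < es.length),
    (es[i]'(Nat.lt_of_succ_lt h) ∈ M ↔ es[i + 1]'h ∉ M)

/-- The gain `g_M` of a list of edges. -/
noncomputable def gainL {V : Type*} [MetricSpace V] (M : Set (Sym2 V))
    (es : List (Sym2 V)) : ℝ :=
  (es.map (fun e => if e ∈ M then edgeCost e else -edgeCost e)).sum

/-- `M` is a perfect matching on the finite point set `S`. -/
def IsPM {V : Type*} (M : Finset (Sym2 V)) (S : Finset V) : Prop :=
  (∀ e ∈ M, ¬ e.IsDiag) ∧ (∀ e ∈ M, ∀ x ∈ e, x ∈ S) ∧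
  (∀ x ∈ S, ∃! e, e ∈ M ∧ x ∈ e)

/-!
Every path starts with an `O₁`-edge, so truncating each path to its first edge is an admissible
competitor of gain `Σ c(first edges) ≥ 0`; hence the maximal total gain `g` is nonnegative. As
`c(M̄) = c(O₁) - g`, this gives `c(M̄) ≤ c(O₁)`. By the triangle inequality each shortcut
`e(Pᵢ)` costs at most `c(Pᵢ)`, and the paths are edge-disjoint with union inside `O₁ ∪ M̄`, so
`c(M₁) ≤ c(M̄) + c(⋃ Pᵢ) ≤ c(M̄) + c(O₁) + c(M̄) ≤ 3 c(O₁)`.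
-/

namespace Sym2

variable {V : Type*} [MetricSpace V]

lemma edgeCost_mk (x y : V) : edgeCost s(x, y) = dist x y := rfl

lemma edgeCost_nonneg (e : Sym2 V) : 0 ≤ edgeCost e := by
  induction e using Sym2.ind with
  | _ x y => exact dist_nonneg

end Sym2

open Sym2

section Paths

variable {V : Type*}

lemma edgeList_cons_cons (x y : V) (t : List V) :
    edgeList (x :: y :: t) = s(x, y) :: edgeList (y :: t) := rfl

lemma mem_of_mem_edgeList : ∀ {l : List V} {e : Sym2 V}, e ∈ edgeList l → ∀ v ∈ e, v ∈ l
  | [], _, h | [_], _, h => by simp [edgeList] at h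
  | x :: y :: t, e, h => by
    rw [edgeList_cons_cons, List.mem_cons] at h
    rcases h with rfl | h
    · simp
    · exact fun v hv => List.mem_cons_of_mem x (mem_of_mem_edgeList h v hv)

lemma List.Nodup.edgeList : ∀ {l : List V}, l.Nodup → (edgeList l).Nodup
  | [], _ | [_], _ => List.nodup_nil
  | x :: y :: t, h => by
    rw [edgeList_cons_cons, List.nodup_cons]
    exact ⟨fun hx => (List.nodup_cons.1 h).1 (mem_of_mem_edgeList hx x (by simp)),
      (List.nodup_cons.1 h).2.edgeList⟩

lemma edgeList_take_two : ∀ {l : List V} (h : edgeList l ≠ []),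
    edgeList (l.take 2) = [(edgeList l).head h]
  | [], h | [_], h => absurd rfl h
  | _ :: _ :: _, _ => rfl

lemma dist_le_sum_edgeCost [MetricSpace V] : ∀ {l : List V} {x y : V},
    l.head? = some x → l.getLast? = some y → dist x y ≤ ((edgeList l).map edgeCost).sum
  | [], _, _, hx, _ => by simp at hx
  | [_], _, _, hx, hy => by
    simp only [List.head?_cons, List.getLast?_singleton, Option.some.injEq] at hx hy
    simp [← hx, ← hy, edgeList]
  | z :: w :: t, x, y, hx, hy => by
    obtain rfl : z = x := by simpa using hx
    rw [List.getLast?_cons_cons] at hy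
    rw [edgeList_cons_cons, List.map_cons, List.sum_cons, edgeCost_mk]
    exact (dist_triangle z w y).trans (by gcongr; exact dist_le_sum_edgeCost rfl hy)

end Paths

section Cost

variable {V : Type*} [MetricSpace V]

lemma setCost_mono {S T : Finset (Sym2 V)} (h : S ⊆ T) : setCost S ≤ setCost T :=
  Finset.sum_le_sum_of_subset_of_nonneg h fun e _ _ => edgeCost_nonneg e

lemma setCost_union_le [DecidableEq V] (S T : Finset (Sym2 V)) :
    setCost (S ∪ T) ≤ setCost S + setCost T := by
  have h := Finset.sum_union_inter (s₁ := S) (s₂ := T) (f := edgeCost)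
  have := Finset.sum_nonneg fun e (_ : e ∈ S ∩ T) => edgeCost_nonneg e
  unfold setCost
  linarith

lemma setCost_image_le [DecidableEq V] {ι : Type*} (s : Finset ι) (f : ι → Sym2 V) :
    setCost (s.image f) ≤ ∑ i ∈ s, edgeCost (f i) :=
  Finset.sum_image_le_of_nonneg fun e _ => edgeCost_nonneg e

noncomputable def setGain (M : Set (Sym2 V)) (S : Finset (Sym2 V)) : ℝ :=
  ∑ e ∈ S, if e ∈ M then edgeCost e else -edgeCost e

lemma gainL_eq_setGain [DecidableEq V] (M : Set (Sym2 V)) {es : List (Sym2 V)} (h : es.Nodup) :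
    gainL M es = setGain M es.toFinset := by
  rw [setGain, List.sum_toFinset _ h, gainL]

lemma setGain_coe_eq [DecidableEq V] (O U : Finset (Sym2 V)) :
    setGain (↑O) U = setCost (U ∩ O) - setCost (U \ O) := by
  rw [setGain, ← U.sum_inter_add_sum_sdiff O, setCost, setCost, sub_eq_add_neg,
    ← Finset.sum_neg_distrib]
  congr 1 <;> refine Finset.sum_congr rfl fun e he => ?_ <;> simp_all

lemma setCost_symmDiff [DecidableEq V] (O U : Finset (Sym2 V)) :
    setCost (symmDiff O U) = setCost O - setGain (↑O) U := by
  have hO := O.sum_inter_add_sum_sdiff U edgeCost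
  rw [setGain_coe_eq, Finset.inter_comm, symmDiff_def, Finset.sup_eq_union, setCost,
    Finset.sum_union disjoint_sdiff_sdiff]
  unfold setCost
  linarith

end Cost

section Gain

variable {V : Type*} [MetricSpace V] {ι : Type*} [Fintype ι]

lemma sum_gainL_eq_setGain_biUnion [DecidableEq V] (M : Set (Sym2 V)) {p : ι → List V}
    (hnodup : ∀ i, (p i).Nodup)
    (hdisj : ∀ i j, i ≠ j → Disjoint (edgeList (p i)).toFinset (edgeList (p j)).toFinset) :
    ∑ i, gainL M (edgeList (p i)) =
      setGain M (Finset.univ.biUnion fun i => (edgeList (p i)).toFinset) := by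
  rw [setGain, Finset.sum_biUnion fun i _ j _ hij => hdisj i j hij]
  exact Finset.sum_congr rfl fun i _ => gainL_eq_setGain M (hnodup i).edgeList

lemma sum_gainL_nonneg_of_isMax [DecidableEq V] {M : Finset (Sym2 V)} {p : ι → List V}
    (hnodup : ∀ i, (p i).Nodup) (hne : ∀ i, edgeList (p i) ≠ [])
    (hfirst : ∀ i, (edgeList (p i)).head (hne i) ∈ M)
    (hdisj : ∀ i j, i ≠ j → Disjoint (edgeList (p i)).toFinset (edgeList (p j)).toFinset)
    (hmax : ∀ q : ι → List V, (∀ i, (q i).Nodup) → (∀ i, edgeList (q i) ≠ []) →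
      (∀ i, IsAlt (↑M) (edgeList (q i))) →
      (∀ i (h : edgeList (q i) ≠ []),
        (edgeList (q i)).head h ∈ M ∧ (edgeList (q i)).getLast h ∈ M) →
      (∀ i j, i ≠ j → Disjoint (edgeList (q i)).toFinset (edgeList (q j)).toFinset) →
      ∑ i, gainL (↑M) (edgeList (q i)) ≤ ∑ i, gainL (↑M) (edgeList (p i))) :
    0 ≤ ∑ i, gainL (↑M) (edgeList (p i)) := by
  have htake (i : ι) := edgeList_take_two (hne i)
  have hsub (i : ι) : (edgeList ((p i).take 2)).toFinset ⊆ (edgeList (p i)).toFinset := by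
    simp [htake i, List.head_mem]
  refine le_trans ?_ (hmax (fun i => (p i).take 2)
    (fun i => (hnodup i).sublist (List.take_sublist _ _))
    (fun i => by simp [htake i])
    (fun i => by simp [htake i, IsAlt])
    (fun i _ => by simp [htake i, hfirst i])
    (fun i j hij => (hdisj i j hij).mono (hsub i) (hsub j)))
  refine Finset.sum_nonneg fun i _ => ?_
  simp [htake i, gainL, hfirst i, edgeCost_nonneg]

end Gain

theorem stmt19_general {V : Type*} [MetricSpace V] [DecidableEq V]
    (O₁ : Finset (Sym2 V))
    (k : ℕ) (p : Fin k → List V)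
    (hnodup : ∀ i, (p i).Nodup)
    (hne : ∀ i, edgeList (p i) ≠ [])
    (hbound : ∀ i (h : edgeList (p i) ≠ []),
      (edgeList (p i)).head h ∈ O₁ ∧ (edgeList (p i)).getLast h ∈ O₁)
    (hdisj : ∀ i j, i ≠ j → Disjoint (edgeList (p i)).toFinset (edgeList (p j)).toFinset)
    (hmax : ∀ q : Fin k → List V, (∀ i, (q i).Nodup) → (∀ i, edgeList (q i) ≠ []) →
      (∀ i, IsAlt (↑O₁) (edgeList (q i))) →
      (∀ i (h : edgeList (q i) ≠ []),
        (edgeList (q i)).head h ∈ O₁ ∧ (edgeList (q i)).getLast h ∈ O₁) →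
      (∀ i j, i ≠ j → Disjoint (edgeList (q i)).toFinset (edgeList (q j)).toFinset) →
      ∑ i, gainL (↑O₁) (edgeList (q i)) ≤ ∑ i, gainL (↑O₁) (edgeList (p i)))
    (a b : Fin k → V)
    (hab : ∀ i, (p i).head? = some (a i) ∧ (p i).getLast? = some (b i))
    (Mbar M₁ : Finset (Sym2 V))
    (hMbar : Mbar = symmDiff O₁ (Finset.univ.biUnion (fun i => (edgeList (p i)).toFinset)))
    (hM₁ : M₁ = Mbar ∪ Finset.univ.image (fun i => s(a i, b i))) :
    setCost M₁ ≤ 3 * setCost O₁ := by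
  set U := Finset.univ.biUnion fun i => (edgeList (p i)).toFinset
  have hgain : 0 ≤ setGain (↑O₁) U := by
    rw [← sum_gainL_eq_setGain_biUnion _ hnodup hdisj]
    exact sum_gainL_nonneg_of_isMax hnodup hne (fun i => (hbound i (hne i)).1) hdisj hmax
  have hMbar_le : setCost Mbar ≤ setCost O₁ := by
    rw [hMbar, setCost_symmDiff]
    linarith
  have hshortcuts : ∑ i, edgeCost s(a i, b i) ≤ setCost U := by
    rw [setCost, Finset.sum_biUnion fun i _ j _ hij => hdisj i j hij]
    refine Finset.sum_le_sum fun i _ => ?_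
    rw [edgeCost_mk, List.sum_toFinset _ (hnodup i).edgeList]
    exact dist_le_sum_edgeCost (hab i).1 (hab i).2
  have hU_le : setCost U ≤ setCost O₁ + setCost Mbar := by
    refine (setCost_mono fun e he => ?_).trans (setCost_union_le O₁ Mbar)
    by_cases heO : e ∈ O₁
    · exact Finset.mem_union_left _ heO
    · exact Finset.mem_union_right _ (hMbar ▸ Finset.mem_symmDiff.2 (Or.inr ⟨he, heO⟩))
  calc setCost M₁ ≤ setCost Mbar + ∑ i, edgeCost s(a i, b i) := by
        rw [hM₁]
        exact (setCost_union_le _ _).trans (by gcongr; exact setCost_image_le _ _)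
    _ ≤ 3 * setCost O₁ := by linarith

/-- Let `O₁` be a min-cost perfect matching on an even set `V₁` of points in
a metric space, and let `p 1, …, p k` be edge-disjoint `O₁`-alternating paths, each starting
and ending with an `O₁`-edge, which maximize the total gain `Σᵢ g_{O₁}(p i)`.  Let
`M̄ = O₁ Δ p 1 Δ … Δ p k` and `M₁ = M̄ ∪ {e(p i) : i}`, where `e(p i)` joins the endpoints
`a i`, `b i` of `p i`.  Then `c(M₁) ≤ 3·c(O₁)`. -/
theorem stmt19 {V : Type*} [MetricSpace V] [DecidableEq V]
    (V₁ : Finset V) (hEven : Even V₁.card)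
    (O₁ : Finset (Sym2 V)) (hO₁ : IsPM O₁ V₁)
    (hO₁min : ∀ M, IsPM M V₁ → setCost O₁ ≤ setCost M)
    (k : ℕ) (p : Fin k → List V)
    (hnodup : ∀ i, (p i).Nodup)
    (hne : ∀ i, edgeList (p i) ≠ [])
    (halt : ∀ i, IsAlt (↑O₁) (edgeList (p i)))
    (hbound : ∀ i (h : edgeList (p i) ≠ []),
      (edgeList (p i)).head h ∈ O₁ ∧ (edgeList (p i)).getLast h ∈ O₁)
    (hdisj : ∀ i j, i ≠ j → Disjoint (edgeList (p i)).toFinset (edgeList (p j)).toFinset)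
    (hmax : ∀ q : Fin k → List V, (∀ i, (q i).Nodup) → (∀ i, edgeList (q i) ≠ []) →
      (∀ i, IsAlt (↑O₁) (edgeList (q i))) →
      (∀ i (h : edgeList (q i) ≠ []),
        (edgeList (q i)).head h ∈ O₁ ∧ (edgeList (q i)).getLast h ∈ O₁) →
      (∀ i j, i ≠ j → Disjoint (edgeList (q i)).toFinset (edgeList (q j)).toFinset) →
      ∑ i, gainL (↑O₁) (edgeList (q i)) ≤ ∑ i, gainL (↑O₁) (edgeList (p i)))
    (a b : Fin k → V)
    (hab : ∀ i, (p i).head? = some (a i) ∧ (p i).getLast? = some (b i))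
    (Mbar M₁ : Finset (Sym2 V))
    (hMbar : Mbar = symmDiff O₁ (Finset.univ.biUnion (fun i => (edgeList (p i)).toFinset)))
    (hM₁ : M₁ = Mbar ∪ Finset.univ.image (fun i => s(a i, b i))) :
    setCost M₁ ≤ 3 * setCost O₁ :=
  stmt19_general O₁ k p hnodup hne hbound hdisj hmax a b hab Mbar M₁ hMbar hM₁
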